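/- arXiv:2206.12833 — 3 statements merged into one kernel-verified Lean document; each statement's English description precedes it below -/
import Mathlib

section
/- For every real x > 0, e^(−x)/(1 − e^(−x))² < (1 + x)/x². -/
/-! Since 1 - e^{-x} = 2 e^{-x/2} sinh (x/2), the left side equals 1 / (2 sinh (x/2))², and
sinh t > t for t > 0 bounds it by 1 / x² < (1 + x) / x². -/

open Real

theorem one_sub_exp_neg_eq_exp_mul_sinh (x : ℝ) :
    1 - exp (-x) = exp (-(x / 2)) * (2 * sinh (x / 2)) := by
  rw [sinh_eq, mul_div_cancel₀ _ two_ne_zero, mul_sub, ← exp_add, ← exp_add,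
    neg_add_cancel, exp_zero, ← neg_add, add_halves]

theorem exp_neg_div_one_sub_exp_neg_sq (x : ℝ) :
    exp (-x) / (1 - exp (-x)) ^ 2 = ((2 * sinh (x / 2)) ^ 2)⁻¹ := by
  rw [one_sub_exp_neg_eq_exp_mul_sinh, mul_pow, ← exp_nat_mul, div_mul_eq_div_div,
    show (2 : ℕ) * -(x / 2) = -x by push_cast; ring, div_self (exp_ne_zero _), one_div]

theorem inv_two_mul_sinh_half_sq_lt {x : ℝ} (hx : 0 < x) :
    ((2 * sinh (x / 2)) ^ 2)⁻¹ < (x ^ 2)⁻¹ := by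
  have hsinh : x < 2 * sinh (x / 2) := by linarith [self_lt_sinh_iff.mpr (half_pos hx)]
  gcongr

theorem exp_neg_div_sq_bound (x : ℝ) (hx : 0 < x) :
    Real.exp (-x) / (1 - Real.exp (-x)) ^ 2 < (1 + x) / x ^ 2 := by
  calc exp (-x) / (1 - exp (-x)) ^ 2 = ((2 * sinh (x / 2)) ^ 2)⁻¹ :=
        exp_neg_div_one_sub_exp_neg_sq x
    _ < (x ^ 2)⁻¹ := inv_two_mul_sinh_half_sq_lt hx
    _ = 1 / x ^ 2 := (one_div _).symm
    _ < (1 + x) / x ^ 2 := by gcongr; linarith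
end

section
/- For every integer n ≥ 1, the overpartition function satisfies p̄(n) < e^(π√n). -/
/-!
For `0 < x < 1`, the overpartition generating function is `∏ (1 + x^j) / (1 - x^j)`, so
`p̄(n) x^n ≤ ∏_{j ≤ n} (1 + x^j) / (1 - x^j)`. Expanding
`log ((1 + y) / (1 - y)) = 2 ∑ y^(2k+1) / (2k+1)` and using `x^m / (1 - x^m) ≤ x / (m (1 - x))`,
the logarithm of this product is at most `2 ∑ 1 / (2k+1)² · x / (1 - x) = π²/4 · x / (1 - x)`.
Writing `t = x / (1 - x)` gives `p̄(n) ≤ exp (π² t / 4) (1 + 1/t)^n < exp (π² t / 4 + n / t)`,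
and `t = 2 √n / π` makes the exponent `π √n`.
-/

open Real Finset

/-- The number of overpartitions of `n`. -/
noncomputable def overpartition (n : ℕ) : ℕ :=
  ∑ k ∈ Finset.range (n + 1),
    (Nat.Partition.distincts k).card * Fintype.card (Nat.Partition (n - k))

theorem Multiset.sum_prod_map_le_prod_geom_sum {α R : Type*} [DecidableEq α] [CommSemiring R]
    [PartialOrder R] [IsOrderedRing R] {A : Finset α} {S : Finset (Multiset α)} {c : ℕ}
    {y : α → R} (hy : ∀ a ∈ A, 0 ≤ y a) (hSA : ∀ s ∈ S, ∀ a ∈ s, a ∈ A)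
    (hSc : ∀ s ∈ S, ∀ a, s.count a ≤ c) :
    ∑ s ∈ S, (s.map y).prod ≤ ∏ a ∈ A, ∑ k ∈ Finset.range (c + 1), y a ^ k := by
  set counts : Multiset α → (a : α) → a ∈ A → ℕ := fun s a _ => s.count a
  have hcounts : ∀ s ∈ S, (s.map y).prod = ∏ a ∈ A.attach, y a ^ counts s a a.2 := by
    intro s hs
    rw [prod_multiset_map_count, prod_attach A (fun a => y a ^ s.count a)]
    refine prod_subset (fun a ha => hSA s hs a (Multiset.mem_toFinset.mp ha)) fun a _ ha => ?_
    rw [Multiset.count_eq_zero.mpr (Multiset.mem_toFinset.not.mp ha), pow_zero]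
  have hinj : Set.InjOn counts S := by
    intro s hs s' hs' h
    ext a
    by_cases ha : a ∈ A
    · exact congrFun₂ h a ha
    · rw [Multiset.count_eq_zero.mpr fun h => ha (hSA s hs a h),
        Multiset.count_eq_zero.mpr fun h => ha (hSA s' hs' a h)]
  rw [Finset.prod_sum, sum_congr rfl hcounts,
    ← sum_image (f := fun p => ∏ a ∈ A.attach, y a ^ p a a.2) hinj]
  refine sum_le_sum_of_subset_of_nonneg ?_ fun _ _ _ =>
    Finset.prod_nonneg fun a _ => pow_nonneg (hy a a.2) _
  rintro _ hp
  obtain ⟨s, hs, rfl⟩ := Finset.mem_image.mp hp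
  exact Finset.mem_pi.mpr fun a _ => Finset.mem_range.mpr (Nat.lt_succ_of_le (hSc s hs a))

theorem Multiset.prod_map_pow_eq_pow_sum {M : Type*} [CommMonoid M] (x : M) (s : Multiset ℕ) :
    (s.map (x ^ ·)).prod = x ^ s.sum :=
  Multiset.induction_on s (by simp) fun a s ih => by simp [ih, pow_add]

theorem Nat.Partition.sum_card_mul_pow_le_of_count_le {R : Type*} [CommSemiring R]
    [PartialOrder R] [IsOrderedRing R] (P : (m : ℕ) → Finset m.Partition) {n c : ℕ}
    (hc : ∀ m ≤ n, ∀ p ∈ P m, ∀ i, p.parts.count i ≤ c) {x : R} (hx : 0 ≤ x) :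
    ∑ m ∈ range (n + 1), ((P m).card : R) * x ^ m ≤
      ∏ j ∈ Icc 1 n, ∑ k ∈ range (c + 1), (x ^ j) ^ k := by
  set S := (range (n + 1)).sigma P
  have hle : ∀ σ ∈ S, σ.1 ≤ n := fun σ hσ => Nat.lt_succ_iff.mp (mem_range.mp (mem_sigma.mp hσ).1)
  have hinj : Set.InjOn (fun σ : Σ m : ℕ, m.Partition => σ.2.parts) S := by
    rintro ⟨m, p⟩ - ⟨m', p'⟩ - (h : p.parts = p'.parts)
    obtain rfl : m = m' := by rw [← p.parts_sum, ← p'.parts_sum, h]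
    rw [Nat.Partition.ext h]
  calc ∑ m ∈ range (n + 1), ((P m).card : R) * x ^ m
      = ∑ σ ∈ S, (σ.2.parts.map (x ^ ·)).prod := by
        simp only [Multiset.prod_map_pow_eq_pow_sum, Nat.Partition.parts_sum, S, sum_sigma,
          sum_const, nsmul_eq_mul]
    _ = ∑ s ∈ S.image (fun σ => σ.2.parts), (s.map (x ^ ·)).prod := by rw [sum_image hinj]
    _ ≤ _ := by
      refine Multiset.sum_prod_map_le_prod_geom_sum (fun j _ => pow_nonneg hx j) ?_ ?_
      · simp only [mem_image, mem_Icc]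
        rintro _ ⟨σ, hσ, rfl⟩ j hj
        exact ⟨σ.2.parts_pos hj, (Nat.Partition.le_of_mem_parts hj).trans (hle σ hσ)⟩
      · simp only [mem_image]
        rintro _ ⟨σ, hσ, rfl⟩
        exact hc σ.1 (hle σ hσ) σ.2 (mem_sigma.mp hσ).2

theorem Nat.Partition.count_parts_le {n : ℕ} (p : n.Partition) (i : ℕ) : p.parts.count i ≤ n :=
  calc p.parts.count i ≤ Multiset.card p.parts := Multiset.count_le_card i _
    _ = Multiset.card p.parts • 1 := by rw [smul_eq_mul, mul_one]
    _ ≤ p.parts.sum := Multiset.card_nsmul_le_sum fun _ => p.parts_pos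
    _ = n := p.parts_sum

theorem Nat.Partition.sum_card_distincts_mul_pow_le {R : Type*} [CommSemiring R]
    [PartialOrder R] [IsOrderedRing R] (n : ℕ) {x : R} (hx : 0 ≤ x) :
    ∑ k ∈ range (n + 1), ((distincts k).card : R) * x ^ k ≤ ∏ j ∈ Icc 1 n, (1 + x ^ j) := by
  have hc : ∀ m ≤ n, ∀ p ∈ distincts m, ∀ i, p.parts.count i ≤ 1 := fun _ _ p hp =>
    Multiset.nodup_iff_count_le_one.mp (mem_filter.mp hp).2
  simpa [sum_range_succ] using sum_card_mul_pow_le_of_count_le distincts hc hx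

theorem Nat.Partition.sum_card_mul_pow_le (n : ℕ) {x : ℝ} (hx0 : 0 ≤ x) (hx1 : x < 1) :
    ∑ m ∈ range (n + 1), (Fintype.card m.Partition : ℝ) * x ^ m ≤ ∏ j ∈ Icc 1 n, (1 - x ^ j)⁻¹ := by
  have hc : ∀ m ≤ n, ∀ p ∈ (univ : Finset m.Partition), ∀ i, p.parts.count i ≤ n :=
    fun _ hm p _ i => (p.count_parts_le i).trans hm
  refine (sum_card_mul_pow_le_of_count_le (fun m => univ) hc hx0).trans
    (prod_le_prod ?_ fun j hj => ?_)
  · exact fun j _ => sum_nonneg fun k _ => by positivity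
  · have hxj : x ^ j < 1 := pow_lt_one₀ hx0 hx1 (by have := (mem_Icc.mp hj).1; omega)
    calc ∑ k ∈ range (n + 1), (x ^ j) ^ k ≤ (x ^ j) ^ 0 / (1 - x ^ j) := by
          rw [range_eq_Ico]; exact geom_sum_Ico_le_of_lt_one (pow_nonneg hx0 j) hxj
      _ = (1 - x ^ j)⁻¹ := by rw [pow_zero, one_div]

theorem overpartition_mul_pow_le (n : ℕ) {x : ℝ} (hx0 : 0 ≤ x) (hx1 : x < 1) :
    (overpartition n : ℝ) * x ^ n ≤ ∏ j ∈ Icc 1 n, (1 + x ^ j) / (1 - x ^ j) := by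
  set B := ∑ m ∈ range (n + 1), (Fintype.card m.Partition : ℝ) * x ^ m
  have hconv : (overpartition n : ℝ) * x ^ n ≤
      (∑ k ∈ range (n + 1), ((Nat.Partition.distincts k).card : ℝ) * x ^ k) * B := by
    rw [overpartition, Nat.cast_sum, sum_mul, sum_mul]
    refine sum_le_sum fun k hk => ?_
    have hkn : k ≤ n := Nat.lt_succ_iff.mp (mem_range.mp hk)
    calc ((Nat.Partition.distincts k).card * Fintype.card (n - k).Partition : ℕ) * x ^ n
        = ((Nat.Partition.distincts k).card * x ^ k) *
            ((Fintype.card (n - k).Partition : ℝ) * x ^ (n - k)) := by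
          rw [← pow_mul_pow_sub x hkn]; push_cast; ring
      _ ≤ ((Nat.Partition.distincts k).card * x ^ k) * B := by
          have hmem : n - k ∈ range (n + 1) := mem_range.mpr (Nat.lt_succ_of_le (Nat.sub_le n k))
          have hB := single_le_sum (f := fun m => (Fintype.card m.Partition : ℝ) * x ^ m)
            (fun m _ => by positivity) hmem
          exact mul_le_mul_of_nonneg_left hB (by positivity)
  calc (overpartition n : ℝ) * x ^ n
      ≤ (∏ j ∈ Icc 1 n, (1 + x ^ j)) * ∏ j ∈ Icc 1 n, (1 - x ^ j)⁻¹ :=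
        hconv.trans (mul_le_mul (Nat.Partition.sum_card_distincts_mul_pow_le n hx0)
          (Nat.Partition.sum_card_mul_pow_le n hx0 hx1) (sum_nonneg fun m _ => by positivity)
          (prod_nonneg fun j _ => by positivity))
    _ = ∏ j ∈ Icc 1 n, (1 + x ^ j) / (1 - x ^ j) := by simp only [div_eq_mul_inv, prod_mul_distrib]

theorem hasSum_one_div_odd_sq :
    HasSum (fun k : ℕ => 1 / (2 * (k : ℝ) + 1) ^ 2) (π ^ 2 / 8) := by
  have heven : HasSum (fun k : ℕ => 1 / ((2 * k : ℕ) : ℝ) ^ 2) (π ^ 2 / 24) := by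
    have h := hasSum_zeta_two.mul_left (1 / 4)
    rw [show 1 / 4 * (π ^ 2 / 6) = π ^ 2 / 24 by ring] at h
    refine h.congr_fun fun k => ?_
    push_cast
    ring
  have hodd : Summable (fun k : ℕ => 1 / ((2 * k + 1 : ℕ) : ℝ) ^ 2) :=
    hasSum_zeta_two.summable.comp_injective fun a b h => by omega
  have htotal := hasSum_zeta_two.unique
    (HasSum.even_add_odd (f := fun n : ℕ => 1 / (n : ℝ) ^ 2) heven hodd.hasSum)
  rw [show π ^ 2 / 8 = ∑' k : ℕ, 1 / ((2 * k + 1 : ℕ) : ℝ) ^ 2 by linarith]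
  exact hodd.hasSum.congr_fun fun k => by push_cast; ring

theorem pow_div_one_sub_pow_le {x : ℝ} (hx0 : 0 ≤ x) (hx1 : x < 1) {m : ℕ} (hm : 0 < m) :
    x ^ m / (1 - x ^ m) ≤ x / (m * (1 - x)) := by
  obtain ⟨k, rfl⟩ := Nat.exists_eq_add_one_of_ne_zero hm.ne'
  have hgeom : (k + 1 : ℝ) * x ^ k ≤ ∑ i ∈ range (k + 1), x ^ i := by
    simpa using card_nsmul_le_sum (range (k + 1)) (x ^ ·) (x ^ k)
      fun i hi => pow_le_pow_of_le_one hx0 hx1.le (Nat.lt_succ_iff.mp (mem_range.mp hi))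
  have hxk : x ^ (k + 1) < 1 := pow_lt_one₀ hx0 hx1 k.succ_ne_zero
  rw [div_le_div_iff₀ (by linarith) (by push_cast; nlinarith), ← geom_sum_mul_neg, pow_succ]
  push_cast
  nlinarith [mul_le_mul_of_nonneg_right hgeom (mul_nonneg hx0 (by linarith : (0 : ℝ) ≤ 1 - x))]

theorem sum_Icc_pow_pow_le {x : ℝ} (hx0 : 0 ≤ x) (hx1 : x < 1) (n : ℕ) {m : ℕ} (hm : 0 < m) :
    ∑ j ∈ Icc 1 n, (x ^ j) ^ m ≤ x / (m * (1 - x)) :=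
  calc ∑ j ∈ Icc 1 n, (x ^ j) ^ m = ∑ j ∈ Ico 1 (n + 1), (x ^ m) ^ j := by
        rw [Ico_add_one_right_eq_Icc]; simp only [pow_right_comm]
    _ ≤ (x ^ m) ^ 1 / (1 - x ^ m) :=
        geom_sum_Ico_le_of_lt_one (pow_nonneg hx0 m) (pow_lt_one₀ hx0 hx1 hm.ne')
    _ ≤ x / (m * (1 - x)) := by rw [pow_one]; exact pow_div_one_sub_pow_le hx0 hx1 hm

theorem one_add_div_one_sub_eq_exp_tsum {y : ℝ} (hy : |y| < 1) :
    (1 + y) / (1 - y) = exp (∑' k : ℕ, 2 * (1 / (2 * k + 1)) * y ^ (2 * k + 1)) := by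
  rw [(hasSum_log_sub_log_of_abs_lt_one hy).tsum_eq, exp_sub,
    exp_log (by linarith [neg_abs_le y]), exp_log (by linarith [le_abs_self y])]

theorem prod_one_add_div_one_sub_le_exp (n : ℕ) {x : ℝ} (hx0 : 0 ≤ x) (hx1 : x < 1) :
    ∏ j ∈ Icc 1 n, (1 + x ^ j) / (1 - x ^ j) ≤ exp (π ^ 2 / 4 * (x / (1 - x))) := by
  set a : ℕ → ℕ → ℝ := fun j k => 2 * (1 / (2 * k + 1)) * (x ^ j) ^ (2 * k + 1)
  have hxj : ∀ j ∈ Icc 1 n, |x ^ j| < 1 := fun j hj => by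
    rw [abs_of_nonneg (pow_nonneg hx0 j)]
    exact pow_lt_one₀ hx0 hx1 (by have := (mem_Icc.mp hj).1; omega)
  have ha : ∀ j ∈ Icc 1 n, Summable (a j) := fun j hj =>
    (hasSum_log_sub_log_of_abs_lt_one (hxj j hj)).summable
  have hbound : HasSum (fun k : ℕ => 2 * (1 / (2 * k + 1) ^ 2) * (x / (1 - x)))
      (π ^ 2 / 4 * (x / (1 - x))) := by
    have h := (hasSum_one_div_odd_sq.mul_left 2).mul_right (x / (1 - x))
    rwa [show 2 * (π ^ 2 / 8) * (x / (1 - x)) = π ^ 2 / 4 * (x / (1 - x)) by ring] at h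
  have hterm : ∀ k : ℕ, ∑ j ∈ Icc 1 n, a j k ≤ 2 * (1 / (2 * k + 1) ^ 2) * (x / (1 - x)) := by
    intro k
    calc ∑ j ∈ Icc 1 n, a j k = 2 * (1 / (2 * k + 1)) * ∑ j ∈ Icc 1 n, (x ^ j) ^ (2 * k + 1) :=
          (mul_sum ..).symm
      _ ≤ 2 * (1 / (2 * k + 1)) * (x / ((2 * k + 1 : ℕ) * (1 - x))) :=
          mul_le_mul_of_nonneg_left (sum_Icc_pow_pow_le hx0 hx1 n (2 * k).succ_pos) (by positivity)
      _ = 2 * (1 / (2 * k + 1) ^ 2) * (x / (1 - x)) := by push_cast; field_simp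
  calc ∏ j ∈ Icc 1 n, (1 + x ^ j) / (1 - x ^ j) = exp (∑ j ∈ Icc 1 n, ∑' k, a j k) := by
        rw [exp_sum]; exact prod_congr rfl fun j hj => one_add_div_one_sub_eq_exp_tsum (hxj j hj)
    _ = exp (∑' k, ∑ j ∈ Icc 1 n, a j k) := by rw [Summable.tsum_finsetSum ha]
    _ ≤ exp (π ^ 2 / 4 * (x / (1 - x))) :=
        exp_le_exp.mpr (hbound.tsum_eq ▸ (summable_sum ha).tsum_le_tsum hterm hbound.summable)

theorem overpartition_le_exp_mul (n : ℕ) {t : ℝ} (ht : 0 < t) :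
    (overpartition n : ℝ) ≤ exp (π ^ 2 / 4 * t) * (1 + 1 / t) ^ n := by
  set x := t / (1 + t)
  have hx0 : 0 < x := by positivity
  have hx1 : x < 1 := (div_lt_one (by linarith)).mpr (by linarith)
  have hbound := (overpartition_mul_pow_le n hx0.le hx1).trans
    (prod_one_add_div_one_sub_le_exp n hx0.le hx1)
  have hxt : x / (1 - x) = t := by
    have : 0 < 1 + t := by linarith
    simp only [x]
    field_simp
    ring
  rw [hxt, ← le_div_iff₀ (pow_pos hx0 n)] at hbound
  calc (overpartition n : ℝ) ≤ exp (π ^ 2 / 4 * t) / x ^ n := hbound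
    _ = exp (π ^ 2 / 4 * t) * (1 + 1 / t) ^ n := by
      rw [div_eq_mul_inv, ← inv_pow, inv_div, add_div, div_self ht.ne', add_comm (1 / t)]

theorem overpartition_lt_exp (n : ℕ) (hn : 1 ≤ n) :
    (overpartition n : ℝ) < Real.exp (π * Real.sqrt n) := by
  have hsqrt : 0 < √(n : ℝ) := Real.sqrt_pos.mpr (by exact_mod_cast hn)
  set t := 2 * √(n : ℝ) / π
  have ht : 0 < t := by positivity
  calc (overpartition n : ℝ) ≤ exp (π ^ 2 / 4 * t) * (1 + 1 / t) ^ n :=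
        overpartition_le_exp_mul n ht
    _ < exp (π ^ 2 / 4 * t) * exp (1 / t) ^ n := by
        gcongr
        linarith [add_one_lt_exp (one_div_pos.mpr ht).ne']
    _ = exp (π * √(n : ℝ)) := by
        rw [← exp_nat_mul, ← exp_add]
        congr 1
        have hsq : √(n : ℝ) ^ 2 = n := sq_sqrt n.cast_nonneg
        have hπ : π ≠ 0 := pi_pos.ne'
        simp only [t]
        field_simp
        linear_combination (-4) * hsq
end

section
/- For every real n₁ ≥ 109, 2π√n₁ − π√(2n₁) > log(0.6648·8·n₁/(0.0019)²) + log((1 + 1/√(2n₁))/((1 − 1/√n₁)²)). -/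
/-!
With `s = √n₁ ≥ 10.44`, the left side is `π (2 - √2) s ≥ 1.84 s`, linear in `s`. Both logarithms
are bounded by linear functions of `s` through `log y ≤ y - 1`: the first, after factoring out its
value at `s = 10.44`, via `log ((s / 10.44)²) ≤ 2 (s / 10.44 - 1)`; the second, which tends to `0`,
by `1 / √(2 n₁) + 2 / (s - 1)`. Since the slope `2 / 10.44` of the first bound is below `1.84`, it
remains to compare at `s = 10.44`, which rests on `log (0.6648 · 8 · 10.44² / 0.0019²) < 18.9`;
the margin there is about `0.03`.
-/

open Real

namespace Real

lemma log_le_two_mul_sqrt_sub_one {x : ℝ} (hx : 0 < x) : log x ≤ 2 * (√x - 1) := by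
  have h := log_le_sub_one_of_pos (sqrt_pos.mpr hx)
  rw [log_sqrt hx.le] at h
  linarith

lemma log_mul_le_log_mul_sq_add {c b x : ℝ} (hc : 0 < c) (hb : 0 < b) (hx : 0 < x) :
    log (c * x) ≤ log (c * b ^ 2) + 2 / b * √x - 2 := by
  have hsplit : c * x = c * b ^ 2 * (x / b ^ 2) := by field_simp
  have h := log_le_two_mul_sqrt_sub_one (show 0 < x / b ^ 2 by positivity)
  rw [sqrt_div' x (sq_nonneg b), sqrt_sq hb.le] at h
  rw [hsplit, log_mul (by positivity) (by positivity)]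
  have hrw : 2 * (√x / b - 1) = 2 / b * √x - 2 := by ring
  linarith

lemma neg_one_div_sub_one_le_log_one_sub_one_div {s : ℝ} (hs : 1 < s) :
    -(1 / (s - 1)) ≤ log (1 - 1 / s) := by
  have hs' : 0 < 1 - 1 / s := by
    rw [sub_pos, div_lt_one (by linarith)]
    exact hs
  have hinv : 1 - (1 - 1 / s)⁻¹ = -(1 / (s - 1)) := by
    have : s - 1 ≠ 0 := by linarith
    field_simp
    ring
  exact hinv ▸ one_sub_inv_le_log_of_pos hs'

lemma log_one_add_div_one_sub_one_div_sq_le {u s : ℝ} (hu : -1 < u) (hs : 1 < s) :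
    log ((1 + u) / (1 - 1 / s) ^ 2) ≤ u + 2 / (s - 1) := by
  have hnum := log_le_sub_one_of_pos (show 0 < 1 + u by linarith)
  have hden := neg_one_div_sub_one_le_log_one_sub_one_div hs
  have hden_ne : (1 - 1 / s) ^ 2 ≠ 0 :=
    pow_ne_zero 2 (sub_pos.mpr ((div_lt_one (by linarith)).mpr hs)).ne'
  have htwo : 2 / (s - 1) = 2 * (1 / (s - 1)) := by ring
  rw [log_div (by linarith) hden_ne, log_pow, htwo]
  push_cast
  linarith

end Real

lemma one_point_eight_four_le_pi_mul_two_sub_sqrt_two : 1.84 ≤ π * (2 - √2) := by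
  have hsqrt : √2 < 1.41422 := (sqrt_lt' (by norm_num)).mpr (by norm_num)
  nlinarith [pi_gt_d4]

lemma log_leading_const_lt : log (0.6648 * 8 / 0.0019 ^ 2 * 10.44 ^ 2) < 18.9 := by
  rw [log_lt_iff_lt_exp (by norm_num)]
  have hexp : (0.9 : ℝ) ≤ exp (-0.1) := by linarith [add_one_le_exp (-0.1 : ℝ)]
  calc (0.6648 * 8 / 0.0019 ^ 2 * 10.44 ^ 2 : ℝ) < 2.7182818283 ^ 19 * 0.9 := by norm_num
    _ < exp 1 ^ 19 * 0.9 := by gcongr; exact exp_one_gt_d9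
    _ ≤ exp 1 ^ 19 * exp (-0.1) := by gcongr
    _ = exp 18.9 := by rw [← exp_nat_mul, ← exp_add]; norm_num

theorem T_gt_log_c3 (n₁ : ℝ) (hn₁ : 109 ≤ n₁) :
    2 * π * Real.sqrt n₁ - π * Real.sqrt (2 * n₁) >
      Real.log (0.6648 * 8 * n₁ / (0.0019 : ℝ) ^ 2) +
        Real.log ((1 + 1 / Real.sqrt (2 * n₁)) / (1 - 1 / Real.sqrt n₁) ^ 2) := by
  have hn : 0 < n₁ := by linarith
  have hs : 10.44 ≤ √n₁ := (le_sqrt' (by norm_num)).mpr (by linarith)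
  have h2s : 14.76 ≤ √(2 * n₁) := (le_sqrt' (by norm_num)).mpr (by linarith)
  have hlhs : 1.84 * √n₁ ≤ 2 * π * √n₁ - π * √(2 * n₁) :=
    calc 1.84 * √n₁ ≤ π * (2 - √2) * √n₁ := by
          gcongr; exact one_point_eight_four_le_pi_mul_two_sub_sqrt_two
      _ = 2 * π * √n₁ - π * √(2 * n₁) := by rw [sqrt_mul zero_le_two]; ring
  have hfirst : log (0.6648 * 8 * n₁ / 0.0019 ^ 2) ≤ 16.9 + 2 / 10.44 * √n₁ := by
    rw [show 0.6648 * 8 * n₁ / (0.0019 : ℝ) ^ 2 = 0.6648 * 8 / 0.0019 ^ 2 * n₁ by ring]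
    linarith [log_leading_const_lt,
      log_mul_le_log_mul_sq_add (c := 0.6648 * 8 / 0.0019 ^ 2) (b := 10.44)
        (by norm_num) (by norm_num) hn]
  have hsecond : log ((1 + 1 / √(2 * n₁)) / (1 - 1 / √n₁) ^ 2) ≤ 1 / 14.76 + 2 / 9.44 := by
    refine (log_one_add_div_one_sub_one_div_sq_le
      (neg_one_lt_zero.trans (by positivity)) (by linarith)).trans ?_
    gcongr
    linarith
  linarith
end
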